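/- Let K be a field, n > 1, and a ∈ K[s]^n a nonzero row vector of degree d, with associated coefficient matrix A ∈ K^{(2d+1) × n(d+1)}. If b_1,...,b_l ∈ K^{n(d+1)} form a K-basis of ker(A), then syz(a) is generated as a K[s]-module by b_1^♭, ..., b_l^♭. -/

import Mathlib

open Polynomial
open scoped Classical

noncomputable section

/-- The degree of a polynomial vector: the maximum of the degrees of the entries. -/
def vdeg {K : Type*} [Field K] {n : ℕ} (h : Fin n → K[X]) : ℕ :=
  Finset.univ.sup fun i => (h i).natDegree

/-- The leading vector of a polynomial vector: the vector of coefficients of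
`s ^ (vdeg h)` in the entries. -/
def LV {K : Type*} [Field K] {n : ℕ} (h : Fin n → K[X]) : Fin n → K :=
  fun i => (h i).coeff (vdeg h)

/-- The syzygy module of a row vector `a` of polynomials. -/
def syz {K : Type*} [Field K] {n : ℕ} (a : Fin n → K[X]) :
    Submodule K[X] (Fin n → K[X]) where
  carrier := {h | ∑ i, a i * h i = 0}
  add_mem' := by
    intro x y hx hy
    simp only [Set.mem_setOf_eq] at *
    simp only [Pi.add_apply, mul_add, Finset.sum_add_distrib, hx, hy, add_zero]
  zero_mem' := by simp
  smul_mem' := by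
    intro c x hx
    simp only [Set.mem_setOf_eq] at *
    have h1 : ∑ i, a i * (c • x) i = c * ∑ i, a i * x i := by
      rw [Finset.mul_sum]
      refine Finset.sum_congr rfl fun i _ => ?_
      simp only [Pi.smul_apply, smul_eq_mul]
      ring
    rw [h1, hx, mul_zero]

/-- The coefficient matrix `A ∈ K^{(2d+1) × n(d+1)}` associated with a polynomial row
vector `a` of degree at most `d`:  `A_{k+1, i+jn} = c_{k-j,i}` where `c_m` is the vector of
coefficients of `s^m` in `a` (with `c_m = 0` for `m < 0` or `m > d`). -/
def coefA {K : Type*} [Field K] {n : ℕ} (d : ℕ) (hn : 0 < n) (a : Fin n → K[X]) :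
    Matrix (Fin (2*d+1)) (Fin (n*(d+1))) K :=
  Matrix.of fun k ℓ =>
    if (ℓ : ℕ) / n ≤ (k : ℕ) then
      (a ⟨(ℓ : ℕ) % n, Nat.mod_lt _ hn⟩).coeff ((k : ℕ) - (ℓ : ℕ) / n)
    else 0

/-- The `♭` isomorphism `K^{n(d+1)} → K[s]^n`: split `v` into `d+1` consecutive blocks
`w_0, …, w_d ∈ K^n` and form `∑_j s^j w_j`. -/
def flatv {K : Type*} [Field K] {n : ℕ} (d : ℕ) (v : Fin (n*(d+1)) → K) : Fin n → K[X] :=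
  fun i => ∑ j : Fin (d+1), C (v ⟨(i:ℕ) + (j:ℕ)*n, by
    calc (i:ℕ) + (j:ℕ)*n < n + (j:ℕ)*n := Nat.add_lt_add_right i.isLt _
      _ = n * ((j:ℕ)+1) := by ring
      _ ≤ n * (d+1) := Nat.mul_le_mul le_rfl j.isLt⟩) * X ^ (j:ℕ)

/-- The `♭` isomorphism `K^m → K[s]` for scalars. -/
def flat1 {K : Type*} [Field K] {m : ℕ} (w : Fin m → K) : K[X] :=
  ∑ k : Fin m, C (w k) * X ^ (k:ℕ)

/-- A column index `j` of a matrix is pivotal if the `j`-th column is not a `K`-linear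
combination of the columns of smaller index. -/
def Pivotal {K : Type*} [Field K] {m N : ℕ} (A : Matrix (Fin m) (Fin N) K) (j : Fin N) : Prop :=
  (fun k => A k j) ∉ Submodule.span K ((fun r : Fin N => fun k => A k r) '' {r | r < j})

/-- A basic non-pivotal index: the minimal non-pivotal index in its residue class modulo `n`. -/
def BasicNP {K : Type*} [Field K] {m N : ℕ} (n : ℕ) (A : Matrix (Fin m) (Fin N) K)
    (r : Fin N) : Prop :=
  ¬ Pivotal A r ∧ ∀ r' : Fin N, ¬ Pivotal A r' → (r':ℕ) % n = (r:ℕ) % n → r ≤ r'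

/-- `B` encodes, for each non-pivotal index `i`, the row-echelon null vector
`b_i = e_i − v_i`: `(b_i)_i = 1`, `(b_i)_j = −α_j` for pivotal `j < i` where
`A_{*i} = Σ α_j A_{*j}`, and all other entries vanish.  Equivalently, `b_i ∈ ker A`,
`(b_i)_i = 1` and `(b_i)_j = 0` unless `j = i` or `j` is pivotal with `j < i`. -/
def IsEchelonNull {K : Type*} [Field K] {m N : ℕ} (A : Matrix (Fin m) (Fin N) K)
    (B : Fin N → Fin N → K) : Prop :=
  ∀ i : Fin N, ¬ Pivotal A i →
    A.mulVec (B i) = 0 ∧ B i i = 1 ∧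
    ∀ j : Fin N, j ≠ i → ¬ (Pivotal A j ∧ j < i) → B i j = 0

/-- Shift an index by `t`, modulo the size (used only when `j + t` is in range). -/
def shiftIdx {N : ℕ} (j : Fin N) (t : ℕ) : Fin N :=
  ⟨((j:ℕ) + t) % N, Nat.mod_lt _ j.pos⟩

/-! Since `K[s]` is a principal ideal domain, a nonzero `a` factors as `g • t` with `g ≠ 0` and
`t` unimodular, so `syz a = syz t`; and if `∑ u_j t_j = 1`, every syzygy `h` of `t` equals
`∑_{j,k} u_j h_k (t_j e_k - t_k e_j)`. These Koszul syzygies have degree at most `d`. On the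
other hand, `A v` is the coefficient vector of `a · v^♭`, so `♭` maps `ker A` onto the syzygies
of degree at most `d`, which therefore lie in the `K`-span of the `b_j^♭`. -/

section Koszul

variable {R ι : Type*} [CommRing R] [Fintype ι] [DecidableEq ι]

def koszulSyzygy (t : ι → R) (j k : ι) : ι → R :=
  Pi.single k (t j) - Pi.single j (t k)

lemma sum_mul_koszulSyzygy (t : ι → R) (j k : ι) : ∑ i, t i * koszulSyzygy t j k i = 0 := by
  simp [koszulSyzygy, mul_sub, Finset.sum_sub_distrib, Pi.single_apply, mul_comm]

lemma sum_smul_koszulSyzygy (t h : ι → R) (j : ι) :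
    ∑ k, h k • koszulSyzygy t j k = t j • h - (∑ k, t k * h k) • Pi.single j 1 := by
  ext i
  simp [koszulSyzygy, Pi.single_apply, mul_sub, Finset.sum_sub_distrib, mul_comm,
    Finset.sum_ite_irrel]

lemma mem_span_koszulSyzygy {t h : ι → R} (ht : Ideal.span (Set.range t) = ⊤)
    (hh : ∑ i, t i * h i = 0) :
    h ∈ Submodule.span R (Set.range fun p : ι × ι => koszulSyzygy t p.1 p.2) := by
  obtain ⟨u, hu⟩ :=
    Ideal.mem_span_range_iff_exists_fun.mp (ht ▸ Submodule.mem_top (x := (1 : R)))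
  have hsum : h = ∑ j, u j • ∑ k, h k • koszulSyzygy t j k := by
    simp_rw [sum_smul_koszulSyzygy, hh, zero_smul, sub_zero, smul_smul, ← Finset.sum_smul, hu,
      one_smul]
  rw [hsum]
  exact Submodule.sum_mem _ fun j _ => Submodule.smul_mem _ _ <| Submodule.sum_mem _ fun k _ =>
    Submodule.smul_mem _ _ <| Submodule.subset_span ⟨(j, k), rfl⟩

end Koszul

lemma exists_eq_smul_and_span_range_eq_top {R ι : Type*} [CommRing R] [IsDomain R]
    [IsPrincipalIdealRing R] [Fintype ι] {a : ι → R} (ha : a ≠ 0) :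
    ∃ g : R, g ≠ 0 ∧ ∃ t : ι → R, a = g • t ∧ Ideal.span (Set.range t) = ⊤ := by
  set g := Submodule.IsPrincipal.generator (Ideal.span (Set.range a))
  have hg : Ideal.span {g} = Ideal.span (Set.range a) := Ideal.span_singleton_generator _
  have hdvd : ∀ i, g ∣ a i := fun i =>
    Ideal.mem_span_singleton.mp (hg ▸ Ideal.subset_span ⟨i, rfl⟩)
  choose t ht using hdvd
  have hg0 : g ≠ 0 := fun h0 => ha (funext fun i => by simp [ht i, h0])
  obtain ⟨u, hu⟩ :=
    Ideal.mem_span_range_iff_exists_fun.mp (hg ▸ Ideal.mem_span_singleton_self g)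
  refine ⟨g, hg0, t, funext ht, ?_⟩
  rw [Ideal.eq_top_iff_one, Ideal.mem_span_range_iff_exists_fun]
  refine ⟨u, mul_left_cancel₀ hg0 ?_⟩
  conv_rhs => rw [mul_one, ← hu]
  simp [ht, Finset.mul_sum, mul_left_comm]

section Syzygies

variable {K : Type*} [Field K] {n : ℕ}

lemma natDegree_le_vdeg (h : Fin n → K[X]) (i : Fin n) : (h i).natDegree ≤ vdeg h :=
  Finset.le_sup (f := fun i => (h i).natDegree) (Finset.mem_univ i)

lemma vdeg_le_iff {h : Fin n → K[X]} {d : ℕ} : vdeg h ≤ d ↔ ∀ i, (h i).natDegree ≤ d :=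
  Finset.sup_le_iff.trans (by simp)

lemma natDegree_single_apply_le (m : Fin n) (p : K[X]) (i : Fin n) :
    ((Pi.single m p : Fin n → K[X]) i).natDegree ≤ p.natDegree := by
  by_cases h : i = m <;> simp [h]

lemma syz_smul {g : K[X]} (hg : g ≠ 0) (t : Fin n → K[X]) : syz (g • t) = syz t := by
  ext h
  change ∑ i, g * t i * h i = 0 ↔ ∑ i, t i * h i = 0
  simp_rw [mul_assoc, ← Finset.mul_sum, mul_eq_zero, hg, false_or]

lemma vdeg_le_vdeg_smul {g : K[X]} (hg : g ≠ 0) (t : Fin n → K[X]) :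
    vdeg t ≤ vdeg (g • t) :=
  vdeg_le_iff.mpr fun i => by
    by_cases hti : t i = 0
    · simp [hti]
    · exact (natDegree_le_of_dvd (dvd_mul_left _ _) (mul_ne_zero hg hti)).trans
        (natDegree_le_vdeg (g • t) i)

lemma vdeg_koszulSyzygy_le (t : Fin n → K[X]) (j k : Fin n) :
    vdeg (koszulSyzygy t j k) ≤ vdeg t :=
  vdeg_le_iff.mpr fun i => (natDegree_sub_le _ _).trans <| max_le
    ((natDegree_single_apply_le k _ i).trans (natDegree_le_vdeg t j))
    ((natDegree_single_apply_le j _ i).trans (natDegree_le_vdeg t k))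

lemma syz_le_span_vdeg_le (a : Fin n → K[X]) :
    syz a ≤ Submodule.span K[X] {h | h ∈ syz a ∧ vdeg h ≤ vdeg a} := by
  by_cases ha : a = 0
  · subst ha
    intro h _
    rw [← Finset.univ_sum_single h]
    refine Submodule.sum_mem _ fun i _ => ?_
    have hsingle : Pi.single i (h i) = h i • Pi.single i (1 : K[X]) := by
      rw [← Pi.single_smul', smul_eq_mul, mul_one]
    rw [hsingle]
    refine Submodule.smul_mem _ _ (Submodule.subset_span ⟨by simp [syz], ?_⟩)
    exact vdeg_le_iff.mpr fun j => (natDegree_single_apply_le i 1 j).trans (by simp)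
  · obtain ⟨g, hg, t, rfl, ht⟩ := exists_eq_smul_and_span_range_eq_top ha
    rw [syz_smul hg]
    intro h hh
    refine Submodule.span_mono ?_ (mem_span_koszulSyzygy ht hh)
    rintro _ ⟨⟨j, k⟩, rfl⟩
    exact ⟨sum_mul_koszulSyzygy t j k,
      (vdeg_koszulSyzygy_le t j k).trans (vdeg_le_vdeg_smul hg t)⟩

end Syzygies

section CoefficientMatrix

variable {K : Type*} [Field K] {n : ℕ}

def blockIdx (hn : 0 < n) (d : ℕ) : Fin n × Fin (d + 1) ≃ Fin (n * (d + 1)) where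
  toFun x := ⟨x.1 + x.2 * n, by nlinarith [x.1.isLt, x.2.isLt]⟩
  invFun ℓ := (⟨ℓ % n, Nat.mod_lt _ hn⟩,
    ⟨ℓ / n, (Nat.div_lt_iff_lt_mul hn).mpr (by simp [mul_comm])⟩)
  left_inv x := by
    ext
    · simp [Nat.add_mul_mod_self_right, Nat.mod_eq_of_lt x.1.isLt]
    · simp [Nat.add_mul_div_right _ _ hn, Nat.div_eq_of_lt x.1.isLt]
  right_inv ℓ := Fin.ext (Nat.mod_add_div' ℓ n)

lemma flatv_apply (hn : 0 < n) (d : ℕ) (v : Fin (n * (d + 1)) → K) (i : Fin n) :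
    flatv d v i = ∑ j : Fin (d + 1), C (v (blockIdx hn d (i, j))) * X ^ (j : ℕ) :=
  rfl

lemma vdeg_flatv_le (d : ℕ) (v : Fin (n * (d + 1)) → K) : vdeg (flatv d v) ≤ d :=
  vdeg_le_iff.mpr fun _ => natDegree_sum_le_of_forall_le _ _ fun j _ =>
    (natDegree_C_mul_X_pow_le _ _).trans (Nat.lt_succ_iff.mp j.isLt)

def flatvₗ (d : ℕ) : (Fin (n * (d + 1)) → K) →ₗ[K] (Fin n → K[X]) where
  toFun := flatv d
  map_add' v w := by
    ext1 i
    simp [flatv, add_mul, Finset.sum_add_distrib]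
  map_smul' c v := by
    ext1 i
    simp [flatv, Finset.smul_sum, smul_eq_C_mul, mul_assoc]

lemma coe_flatvₗ (d : ℕ) : ⇑(flatvₗ (K := K) (n := n) d) = flatv d :=
  rfl

def coeffBlocks (hn : 0 < n) (d : ℕ) (h : Fin n → K[X]) : Fin (n * (d + 1)) → K :=
  fun ℓ => (h ((blockIdx hn d).symm ℓ).1).coeff ((blockIdx hn d).symm ℓ).2

lemma flatv_coeffBlocks (hn : 0 < n) {d : ℕ} {h : Fin n → K[X]} (hh : vdeg h ≤ d) :
    flatv d (coeffBlocks hn d h) = h := by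
  ext1 i
  rw [flatv_apply hn, (h i).as_sum_range_C_mul_X_pow' (Nat.lt_succ_of_le
    ((natDegree_le_vdeg h i).trans hh)), ← Fin.sum_univ_eq_sum_range]
  simp [coeffBlocks]

lemma coefA_apply_blockIdx (hn : 0 < n) (d : ℕ) (a : Fin n → K[X]) (k : Fin (2 * d + 1))
    (i : Fin n) (j : Fin (d + 1)) :
    coefA d hn a k (blockIdx hn d (i, j)) = if (j : ℕ) ≤ k then (a i).coeff (k - j) else 0 := by
  have hdiv : (i + j * n : ℕ) / n = j := by
    rw [Nat.add_mul_div_right _ _ hn, Nat.div_eq_of_lt i.isLt, zero_add]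
  have hmod : (⟨(i + j * n : ℕ) % n, Nat.mod_lt _ hn⟩ : Fin n) = i :=
    Fin.ext (by simp [Nat.add_mul_mod_self_right, Nat.mod_eq_of_lt i.isLt])
  simp only [coefA, Matrix.of_apply, blockIdx, Equiv.coe_fn_mk, hdiv, hmod]

lemma coefA_mulVec_apply (hn : 0 < n) (d : ℕ) (a : Fin n → K[X]) (v : Fin (n * (d + 1)) → K)
    (k : Fin (2 * d + 1)) :
    ((coefA d hn a).mulVec v) k = (∑ i, a i * flatv d v i).coeff k := by
  simp_rw [Matrix.mulVec, dotProduct, ← (blockIdx hn d).sum_comp, Fintype.sum_prod_type,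
    coefA_apply_blockIdx, finsetSum_coeff, flatv_apply hn, Finset.mul_sum, finsetSum_coeff,
    ← mul_assoc, coeff_mul_X_pow', coeff_mul_C, ite_mul, zero_mul]

lemma coefA_mulVec_eq_zero_iff (hn : 0 < n) {d : ℕ} {a : Fin n → K[X]} (ha : vdeg a ≤ d)
    (v : Fin (n * (d + 1)) → K) : (coefA d hn a).mulVec v = 0 ↔ flatv d v ∈ syz a := by
  have hdeg : (∑ i, a i * flatv d v i).natDegree ≤ 2 * d :=
    natDegree_sum_le_of_forall_le _ _ fun i _ => natDegree_mul_le.trans <| by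
      have := (natDegree_le_vdeg a i).trans ha
      have := natDegree_le_vdeg (flatv d v) i |>.trans (vdeg_flatv_le d v)
      omega
  change _ ↔ ∑ i, a i * flatv d v i = 0
  rw [ext_iff_natDegree_le hdeg (natDegree_zero.trans_le (Nat.zero_le _)), funext_iff]
  simp only [coefA_mulVec_apply, Pi.zero_apply, coeff_zero]
  exact ⟨fun h k hk => h ⟨k, Nat.lt_succ_of_le hk⟩,
    fun h k => h k (Nat.le_of_lt_succ k.isLt)⟩

lemma mem_span_flatv_of_mem_syz (hn : 0 < n) {d : ℕ} {a : Fin n → K[X]} (ha : vdeg a ≤ d)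
    {l : ℕ} {b : Fin l → Fin (n * (d + 1)) → K}
    (hspan : Submodule.span K (Set.range b) = LinearMap.ker (coefA d hn a).mulVecLin)
    {h : Fin n → K[X]} (hh : h ∈ syz a) (hdeg : vdeg h ≤ d) :
    h ∈ Submodule.span K (Set.range fun j => flatv d (b j)) := by
  have hker : coeffBlocks hn d h ∈ Submodule.span K (Set.range b) := by
    rw [hspan, LinearMap.mem_ker, Matrix.mulVecLin_apply, coefA_mulVec_eq_zero_iff hn ha,
      flatv_coeffBlocks hn hdeg]
    exact hh
  have := Submodule.mem_map_of_mem (f := flatvₗ d) hker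
  rwa [Submodule.map_span, ← Set.range_comp, coe_flatvₗ, flatv_coeffBlocks hn hdeg] at this

end CoefficientMatrix

theorem syz_generated_by_flat_of_ker_basis_general {K : Type*} [Field K] {n : ℕ} (hn : 1 < n)
    (a : Fin n → K[X]) {d : ℕ} (hd : vdeg a = d)
    {l : ℕ} (b : Fin l → Fin (n*(d+1)) → K)
    (hspan : Submodule.span K (Set.range b) =
      LinearMap.ker (Matrix.mulVecLin (coefA d (Nat.zero_lt_of_lt hn) a))) :
    syz a = Submodule.span K[X] (Set.range fun j => flatv d (b j)) := by
  have hn₀ : 0 < n := Nat.zero_lt_of_lt hn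
  refine le_antisymm ((syz_le_span_vdeg_le a).trans (Submodule.span_le.mpr ?_))
    (Submodule.span_le.mpr ?_)
  · rintro h ⟨hh, hdeg⟩
    exact Submodule.span_le_restrictScalars K K[X] _
      (mem_span_flatv_of_mem_syz hn₀ hd.le hspan hh (hd ▸ hdeg))
  · rintro _ ⟨j, rfl⟩
    have hbj : b j ∈ LinearMap.ker (coefA d hn₀ a).mulVecLin :=
      hspan ▸ Submodule.subset_span ⟨j, rfl⟩
    exact (coefA_mulVec_eq_zero_iff hn₀ hd.le (b j)).mp hbj

/-- Lemma: a basis of `ker A` generates the syzygy module.  If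
`b_1, …, b_l` is a `K`-basis of the kernel of the coefficient matrix `A`, then `syz a` is
generated as a `K[s]`-module by `b_1^♭, …, b_l^♭`. -/
theorem syz_generated_by_flat_of_ker_basis {K : Type*} [Field K] {n : ℕ} (hn : 1 < n)
    (a : Fin n → K[X]) (ha : a ≠ 0) {d : ℕ} (hd : vdeg a = d)
    {l : ℕ} (b : Fin l → Fin (n*(d+1)) → K)
    (hli : LinearIndependent K b)
    (hspan : Submodule.span K (Set.range b) =
      LinearMap.ker (Matrix.mulVecLin (coefA d (Nat.zero_lt_of_lt hn) a))) :
    syz a = Submodule.span K[X] (Set.range fun j => flatv d (b j)) :=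
  syz_generated_by_flat_of_ker_basis_general hn a hd b hspan
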